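/- arXiv:1810.00182 — 3 statements merged into one kernel-verified Lean document; each statement's English description precedes it below -/
import Mathlib

section
/- Let H = (1/n) v vᵀ + c·diag(v) where c > 0 and v = (v_1,…,v_{n-1}, −v_n)ᵀ with all v_k > 0. If there exist a_1,…,a_{n-1} with 0 ≤ a_i < 1, not all zero, such that ∑_{i=1}^{n-1} a_i v_i = v_n, then the vector q = (a_1,…,a_{n-1},1)ᵀ satisfies qᵀ H q < 0; hence H has a negative eigenvalue. -/
/-!
Since `∑_{i<n} a_i v_i = v_n`, the vector `q` is orthogonal to `v`, so the rank-one part of `H`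
contributes nothing to `qᵀ H q`, which reduces to `c · ∑ v_k q_k² = c · (∑_{i<n} a_i² v_i - v_n)`.
As `0 ≤ a_i < 1` gives `a_i² ≤ a_i`, strictly for some `i`, this is less than
`c · (∑_{i<n} a_i v_i - v_n) = 0`. A symmetric matrix with a negative value of its quadratic form
is not positive semidefinite, hence has a negative eigenvalue.
-/

open BigOperators Matrix

namespace Matrix

variable {ι : Type*}

lemma dotProduct_mulVec_vecMulVec_self [Fintype ι] {R : Type*} [CommSemiring R] (v q : ι → R) :
    q ⬝ᵥ (vecMulVec v v *ᵥ q) = (v ⬝ᵥ q) ^ 2 := by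
  rw [vecMulVec_mulVec, op_smul_eq_smul, dotProduct_smul, smul_eq_mul, dotProduct_comm q, sq]

lemma dotProduct_mulVec_diagonal [Fintype ι] {R : Type*} [CommSemiring R] [DecidableEq ι] (v q : ι → R) :
    q ⬝ᵥ (diagonal v *ᵥ q) = ∑ i, v i * q i ^ 2 := by
  simp only [dotProduct, mulVec_diagonal]
  exact Finset.sum_congr rfl fun i _ => by ring

lemma isHermitian_smul_vecMulVec_self_add_smul_diagonal [DecidableEq ι] (s c : ℝ) (v : ι → ℝ) :
    (s • vecMulVec v v + c • diagonal v).IsHermitian :=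
  ((show (vecMulVec v v).IsHermitian by
      rw [IsHermitian, conjTranspose_vecMulVec, star_trivial]).smul (IsSelfAdjoint.all s)).add
    ((isHermitian_diagonal v).smul (IsSelfAdjoint.all c))

lemma IsHermitian.exists_eigenvalue_neg_of_dotProduct_mulVec_neg [Fintype ι] [DecidableEq ι]
    {A : Matrix ι ι ℝ} (hA : A.IsHermitian) {x : ι → ℝ} (hx : x ⬝ᵥ (A *ᵥ x) < 0) :
    ∃ (μ : ℝ) (y : ι → ℝ), μ < 0 ∧ y ≠ 0 ∧ A *ᵥ y = μ • y := by
  have hnot : ¬ A.PosSemidef := fun hpsd =>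
    hx.not_ge (by simpa using hpsd.dotProduct_mulVec_nonneg x)
  obtain ⟨i, hi⟩ : ∃ i, hA.eigenvalues i < 0 := by
    simpa [hA.posSemidef_iff_eigenvalues_nonneg, Pi.le_def] using hnot
  exact ⟨hA.eigenvalues i, hA.eigenvectorBasis i, hi,
    by simpa using hA.eigenvectorBasis.toBasis.ne_zero i, hA.mulVec_eigenvectorBasis i⟩

end Matrix

lemma Fin.sum_univ_eq_sum_filter_lt_pred_add_last {M : Type*} [AddCommMonoid M] {n : ℕ}
    (hn : 0 < n) (f : Fin n → M) :
    ∑ k, f k = ∑ k ∈ Finset.univ.filter (fun k : Fin n => (k : ℕ) < n - 1), f k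
      + f ⟨n - 1, by omega⟩ := by
  rw [← Finset.sum_filter_add_sum_filter_not Finset.univ (fun k : Fin n => (k : ℕ) < n - 1)]
  congr 1
  convert Finset.sum_singleton f (⟨n - 1, by omega⟩ : Fin n)
  ext k
  simp only [Finset.mem_filter, Finset.mem_univ, true_and, Finset.mem_singleton, Fin.ext_iff]
  omega

lemma Finset.sum_sq_mul_lt_sum_mul {ι : Type*} {s : Finset ι} {a w : ι → ℝ}
    (ha0 : ∀ i ∈ s, 0 ≤ a i) (ha1 : ∀ i ∈ s, a i < 1) (hw : ∀ i ∈ s, 0 < w i)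
    (hne : ∃ i ∈ s, a i ≠ 0) :
    ∑ i ∈ s, a i ^ 2 * w i < ∑ i ∈ s, a i * w i := by
  obtain ⟨j, hj, hja⟩ := hne
  refine Finset.sum_lt_sum (fun i hi => ?_) ⟨j, hj, ?_⟩
  · have : a i ^ 2 ≤ a i := by nlinarith [ha0 i hi, ha1 i hi]
    exact mul_le_mul_of_nonneg_right this (hw i hi).le
  · have : a j ^ 2 < a j := by nlinarith [(ha0 j hj).lt_of_ne' hja, ha1 j hj]
    exact mul_lt_mul_of_pos_right this (hw j hj)

theorem saddle_case_m_eq_n_minus_one (n : ℕ) (hn : 2 ≤ n)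
    (w : Fin n → ℝ) (hw : ∀ k, 0 < w k) (c : ℝ) (hc : 0 < c)
    (v : Fin n → ℝ) (hv : ∀ k : Fin n, v k = if (k : ℕ) < n - 1 then w k else -(w k))
    (H : Matrix (Fin n) (Fin n) ℝ)
    (hH : H = (1 / n : ℝ) • (Matrix.of fun k j => v k * v j) + c • Matrix.diagonal v)
    (a : Fin n → ℝ) (ha0 : ∀ k, 0 ≤ a k) (ha1 : ∀ k, a k < 1)
    (hanz : ∃ k : Fin n, (k : ℕ) < n - 1 ∧ a k ≠ 0)
    (hsum : ∑ k ∈ Finset.univ.filter (fun k : Fin n => (k : ℕ) < n - 1), a k * w k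
      = w ⟨n - 1, by omega⟩)
    (q : Fin n → ℝ)
    (hq : ∀ k : Fin n, q k = if (k : ℕ) < n - 1 then a k else 1) :
    q ⬝ᵥ (H *ᵥ q) < 0 ∧ ∃ (μ : ℝ) (x : Fin n → ℝ), μ < 0 ∧ x ≠ 0 ∧ H *ᵥ x = μ • x := by
  set s := Finset.univ.filter (fun k : Fin n => (k : ℕ) < n - 1)
  have hs : ∀ k ∈ s, (k : ℕ) < n - 1 := fun k hk => (Finset.mem_filter.mp hk).2
  have hlast : ¬ (n - 1 < n - 1) := lt_irrefl _
  have hvq : v ⬝ᵥ q = 0 := by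
    rw [dotProduct, Fin.sum_univ_eq_sum_filter_lt_pred_add_last (by omega),
      Finset.sum_congr rfl fun k hk => by rw [hv, hq, if_pos (hs k hk), if_pos (hs k hk), mul_comm],
      hsum, hv, hq, if_neg hlast, if_neg hlast]
    ring
  have hdiag : ∑ k, v k * q k ^ 2 < 0 := by
    rw [Fin.sum_univ_eq_sum_filter_lt_pred_add_last (by omega),
      Finset.sum_congr rfl fun k hk => by rw [hv, hq, if_pos (hs k hk), if_pos (hs k hk), mul_comm],
      hv, hq, if_neg hlast, if_neg hlast, ← hsum]
    obtain ⟨k₀, hk₀, hak₀⟩ := hanz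
    linarith [Finset.sum_sq_mul_lt_sum_mul (s := s) (fun k _ => ha0 k) (fun k _ => ha1 k)
      (fun k _ => hw k) ⟨k₀, Finset.mem_filter.mpr ⟨Finset.mem_univ k₀, hk₀⟩, hak₀⟩]
  have hneg : q ⬝ᵥ (H *ᵥ q) < 0 := by
    rw [hH, add_mulVec, smul_mulVec, smul_mulVec, dotProduct_add, dotProduct_smul, dotProduct_smul,
      ← vecMulVec, dotProduct_mulVec_vecMulVec_self, dotProduct_mulVec_diagonal, hvq]
    simpa using mul_neg_of_pos_of_neg hc hdiag
  refine ⟨hneg, ?_⟩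
  subst hH
  exact (isHermitian_smul_vecMulVec_self_add_smul_diagonal _ c v)
    |>.exists_eigenvalue_neg_of_dotProduct_mulVec_neg hneg
end

section
/- Let H = (1/n) v vᵀ + c·diag(v) with c > 0, where v ∈ ℝⁿ has entries v_k = s_k w_k with w_k > 0 and signs s_k ∈ {+1,−1}, and suppose the last two entries have the same sign (s_{n-1} = s_n = −1 say) for n ≥ 3 with at least one positive-sign entry. Then the vector q = (0,…,0,−w_n, w_{n-1})ᵀ satisfies vᵀq = 0 and qᵀ H q = −c·w_{n-1} w_n (w_{n-1} + w_n) < 0, so H is not positive semidefinite. -/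
/-!
Since `v ⬝ᵥ q = 0`, the rank-one part of `H` vanishes on `q`, leaving `c` times the diagonal form
`∑ v_k q_k²`; as `q` is supported on the two coordinates where `v = -w`, this form is negative.
-/

open BigOperators Matrix

namespace Matrix

variable {ι R : Type*} [Fintype ι]

theorem not_posSemidef_of_dotProduct_mulVec_neg [CommRing R] [PartialOrder R] [StarRing R]
    {M : Matrix ι ι R} (x : ι → R) (h : star x ⬝ᵥ (M *ᵥ x) < 0) : ¬ M.PosSemidef :=
  fun hM => (hM.dotProduct_mulVec_nonneg x).not_gt h

variable [DecidableEq ι]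

theorem dotProduct_rankOne_add_diagonal_mulVec_of_dotProduct_eq_zero [CommRing R]
    (a c : R) {v q : ι → R} (h : v ⬝ᵥ q = 0) :
    q ⬝ᵥ ((a • vecMulVec v v + c • diagonal v) *ᵥ q) = c * (q ⬝ᵥ (diagonal v *ᵥ q)) := by
  rw [add_mulVec, smul_mulVec, smul_mulVec, vecMulVec_mulVec, h]
  simp [dotProduct_smul]

theorem dotProduct_diagonal_mulVec_single_add_single [CommSemiring R] (d : ι → R) {i j : ι}
    (hij : i ≠ j) (x y : R) :
    (Pi.single i x + Pi.single j y) ⬝ᵥ (diagonal d *ᵥ (Pi.single i x + Pi.single j y)) =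
      d i * x ^ 2 + d j * y ^ 2 := by
  simp [mulVec_add, dotProduct_add, dotProduct_single, hij, hij.symm]
  ring

end Matrix

theorem saddle_case_general (n : ℕ) (hn : 3 ≤ n)
    (w : Fin n → ℝ) (hw : ∀ k, 0 < w k) (c : ℝ) (hc : 0 < c)
    (s : Fin n → ℝ)
    (hslast : s ⟨n - 1, by omega⟩ = -1 ∧ s ⟨n - 2, by omega⟩ = -1)
    (v : Fin n → ℝ) (hv : ∀ k, v k = s k * w k)
    (H : Matrix (Fin n) (Fin n) ℝ)
    (hH : H = (1 / n : ℝ) • (Matrix.of fun k j => v k * v j) + c • Matrix.diagonal v)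
    (q : Fin n → ℝ)
    (hq : ∀ k : Fin n, q k =
      if (k : ℕ) = n - 2 then -(w ⟨n - 1, by omega⟩)
      else if (k : ℕ) = n - 1 then w ⟨n - 2, by omega⟩ else 0) :
    v ⬝ᵥ q = 0 ∧
    q ⬝ᵥ (H *ᵥ q) = -(c * w ⟨n - 2, by omega⟩ * w ⟨n - 1, by omega⟩ *
      (w ⟨n - 2, by omega⟩ + w ⟨n - 1, by omega⟩)) ∧
    q ⬝ᵥ (H *ᵥ q) < 0 ∧ ¬ H.PosSemidef := by
  set A : Fin n := ⟨n - 2, by omega⟩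
  set B : Fin n := ⟨n - 1, by omega⟩
  have hAB : A ≠ B := by simp [A, B, Fin.ext_iff]; omega
  have hq_eq : q = Pi.single A (-w B) + Pi.single B (w A) := by
    ext k
    simp only [hq, Pi.add_apply, Pi.single_apply, Fin.ext_iff, A, B]
    split_ifs <;> first | omega | simp
  have hvA : v A = -w A := by rw [hv, hslast.2]; ring
  have hvB : v B = -w B := by rw [hv, hslast.1]; ring
  have hvq : v ⬝ᵥ q = 0 := by
    simp only [hq_eq, dotProduct_add, dotProduct_single, hvA, hvB]
    ring
  have hquad : q ⬝ᵥ (H *ᵥ q) = -(c * w A * w B * (w A + w B)) := by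
    rw [hH, ← vecMulVec.eq_1, dotProduct_rankOne_add_diagonal_mulVec_of_dotProduct_eq_zero _ _ hvq,
      hq_eq, dotProduct_diagonal_mulVec_single_add_single _ hAB, hvA, hvB]
    ring
  have hneg : q ⬝ᵥ (H *ᵥ q) < 0 := by
    have := hw A; have := hw B
    rw [hquad, neg_lt_zero]
    positivity
  exact ⟨hvq, hquad, hneg, not_posSemidef_of_dotProduct_mulVec_neg q (by simpa using hneg)⟩
end

section
/- More generally, a centroid speed v_ref is achievable (i.e., there exist headings with ‖(1/n)∑_k v_k e^{iθ_k}‖ = v_ref) for every v_ref in the interval [max(0, (1/n)(2·max_k v_k − ∑_k v_k)), (1/n)∑_k v_k]. -/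
/-!
Add the vectors one at a time, in increasing order of length. Turning a new vector of length `w`
from the direction of the current sum `z` to the opposite direction moves the norm continuously
from `‖z‖ + w` to `|‖z‖ - w|`, so every value in between is attained. Given a target `c` for the
sum with the new vector, it suffices that the earlier vectors realize `r = min (∑ earlier) (w + c)`,
which lies in their admissible range because `w` dominates each of them.
-/

open Complex BigOperators

theorem exists_norm_add_mul_exp_eq (z : ℂ) {r c : ℝ} (hc : c ∈ Set.Icc |‖z‖ - r| (‖z‖ + r)) :
    ∃ φ : ℝ, ‖z + r * exp (φ * I)‖ = c := by
  set u := exp (arg z * I)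
  have hz : z = ‖z‖ * u := (norm_mul_exp_arg_mul_I z).symm
  have norm_mul_u (t : ℝ) : ‖(t : ℂ) * u‖ = |t| := by
    rw [norm_mul, norm_exp_ofReal_mul_I, mul_one, norm_real, Real.norm_eq_abs]
  have h_along : ‖z + r * u‖ = |‖z‖ + r| := by
    rw [← norm_mul_u]; congr 1; nth_rw 1 [hz]; push_cast; ring
  have h_against : ‖z + r * exp ((arg z + Real.pi : ℝ) * I)‖ = |‖z‖ - r| := by
    rw [← norm_mul_u]; congr 1; nth_rw 1 [hz]
    push_cast; rw [add_mul, exp_add, exp_pi_mul_I]; ring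
  have hcont : Continuous fun φ : ℝ => ‖z + r * exp (φ * I)‖ := by fun_prop
  obtain ⟨φ, -, hφ⟩ := intermediate_value_Icc' (by linarith [Real.pi_pos] : arg z ≤ arg z + Real.pi)
    hcont.continuousOn ⟨h_against.trans_le hc.1, hc.2.trans ((le_abs_self _).trans_eq h_along.symm)⟩
  exact ⟨φ, hφ⟩

theorem exists_norm_sum_mul_exp_eq {ι : Type*} {v : ι → ℝ} (s : Finset ι)
    (hv : ∀ k ∈ s, 0 ≤ v k) {c : ℝ} (hc₀ : 0 ≤ c) (hc : c ≤ ∑ k ∈ s, v k)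
    (hmax : ∀ k ∈ s, 2 * v k - ∑ k ∈ s, v k ≤ c) :
    ∃ θ : ι → ℝ, ‖∑ k ∈ s, (v k : ℂ) * exp (θ k * I)‖ = c := by
  classical
  induction s using Finset.induction_on_max_value v generalizing c with
  | empty => exact ⟨0, by simp_all [le_antisymm hc hc₀]⟩
  | insert x s hx hx_max ih =>
    rw [Finset.sum_insert hx] at hc hmax
    have hvx : 0 ≤ v x := hv x (Finset.mem_insert_self x s)
    have hvs : ∀ k ∈ s, 0 ≤ v k := fun k hk => hv k (Finset.mem_insert_of_mem hk)
    have hle_sum : ∀ k ∈ s, v k ≤ ∑ k ∈ s, v k := fun k hk => Finset.single_le_sum hvs hk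
    obtain ⟨θ, hθ⟩ := ih hvs (c := min (∑ k ∈ s, v k) (v x + c))
      (le_min (Finset.sum_nonneg hvs) (by linarith)) (min_le_left _ _)
      (fun k hk => le_min (by linarith [hle_sum k hk]) (by linarith [hle_sum k hk, hx_max k hk]))
    have hc_range : c ∈ Set.Icc |‖∑ k ∈ s, (v k : ℂ) * exp (θ k * I)‖ - v x|
        (‖∑ k ∈ s, (v k : ℂ) * exp (θ k * I)‖ + v x) := by
      have hx_le := hmax x (Finset.mem_insert_self x s)
      rw [hθ, Set.mem_Icc, abs_sub_le_iff]
      rcases min_cases (∑ k ∈ s, v k) (v x + c) with ⟨h, h'⟩ | ⟨h, h'⟩ <;> rw [h] <;>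
        refine ⟨⟨?_, ?_⟩, ?_⟩ <;> linarith
    obtain ⟨φ, hφ⟩ := exists_norm_add_mul_exp_eq _ hc_range
    refine ⟨Function.update θ x φ, ?_⟩
    rw [Finset.sum_insert hx, Function.update_self, add_comm,
      Finset.sum_congr rfl fun k hk => by rw [Function.update_of_ne (ne_of_mem_of_not_mem hk hx)]]
    exact hφ

theorem achievable_centroid_speeds_general (n : ℕ)
    (v : Fin n → ℝ) (hv : ∀ k, 0 < v k)
    (j : Fin n) (hmax : ∀ k, v k ≤ v j)
    (vref : ℝ)
    (hlo : max 0 ((2 * v j - ∑ k, v k) / n) ≤ vref)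
    (hhi : vref ≤ (1 / n) * ∑ k, v k) :
    ∃ θ : Fin n → ℝ,
      ‖(1 / n : ℂ) * ∑ k, (v k : ℂ) * Complex.exp (θ k * Complex.I)‖ = vref := by
  have hn : (0 : ℝ) < n := Nat.cast_pos.mpr j.pos
  rw [max_le_iff, div_le_iff₀ hn] at hlo
  rw [one_div_mul_eq_div, le_div_iff₀ hn] at hhi
  obtain ⟨θ, hθ⟩ := exists_norm_sum_mul_exp_eq Finset.univ (v := v) (c := vref * n)
    (fun k _ => (hv k).le) (mul_nonneg hlo.1 hn.le) hhi
    (fun k _ => by linarith [hmax k])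
  refine ⟨θ, ?_⟩
  rw [norm_mul, hθ, norm_div, norm_one, Complex.norm_natCast]
  field_simp

theorem achievable_centroid_speeds (n : ℕ) (hn : 2 ≤ n)
    (v : Fin n → ℝ) (hv : ∀ k, 0 < v k)
    (j : Fin n) (hmax : ∀ k, v k ≤ v j)
    (vref : ℝ)
    (hlo : max 0 ((2 * v j - ∑ k, v k) / n) ≤ vref)
    (hhi : vref ≤ (1 / n) * ∑ k, v k) :
    ∃ θ : Fin n → ℝ,
      ‖(1 / n : ℂ) * ∑ k, (v k : ℂ) * Complex.exp (θ k * Complex.I)‖ = vref :=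
  achievable_centroid_speeds_general n v hv j hmax vref hlo hhi
end
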